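/- Let a, b be positive integers, let p_n(x) = x(x+1)⋯(x+n−1) be the rising factorial (p_0 = 1), and let z_i = a + b·i. Define the generalized Gončarov polynomials for the grid −Z = (−z_0, −z_1, …) by t_0(x) = 1 and t_n(x) = p_n(x) − Σ_{i=0}^{n−1} C(n,i) p_{n−i}(−z_i) t_i(x). Then for every n ≥ 1, t_n(x) = (x+a) · ∏_{j=1}^{n−1} (x + a + n·b + j), i.e., t_n(x) = (x+a)·(x+a+nb+1)^{(n−1)} where u^{(m)} denotes the rising factorial u(u+1)⋯(u+m−1). (Equation (4.8).) -/
import Mathlib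


open Finset

/-- The generalized Gončarov polynomials associated with the sequence `p` and the grid `Z`,
via the recurrence `t_n(x; Z) = p_n(x) - ∑_{i<n} C(n,i) p_{n-i}(z_i) t_i(x; Z)`
(with `t_0 = p_0 = 1`). -/
noncomputable def gonc {S : Type*} [CommRing S] (p : ℕ → S → S) (Z : ℕ → S) (n : ℕ) (x : S) : S :=
  p n x - ∑ i ∈ (Finset.range n).attach,
    (n.choose i.1 : S) * p (n - i.1) (Z i.1) * gonc p Z i.1 x
termination_by n
decreasing_by exact Finset.mem_range.mp i.2

/-- The rising factorial `x^{(m)} = x (x+1) ⋯ (x+m-1)`, with `x^{(0)} = 1`. -/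
noncomputable def risingFac (m : ℕ) (x : ℚ) : ℚ := ∏ j ∈ Finset.range m, (x + j)

open Polynomial

noncomputable def Rp (m : ℕ) : ℚ[X] := ∏ j ∈ Finset.range m, (X + C (j : ℚ))

noncomputable def Tp (a b : ℚ) : ℕ → ℚ[X]
  | 0 => 1
  | (i+1) => (X + C a) * ∏ j ∈ Finset.range i, (X + C (a + ((i:ℚ)+1) * b + ((j:ℚ)+1)))

lemma Tp_succ (a b : ℚ) (i : ℕ) : Tp a b (i+1)
    = (X + C a) * ∏ j ∈ Finset.range i, (X + C (a + ((i:ℚ)+1) * b + ((j:ℚ)+1))) := rfl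

lemma finset_sum_comp {s : Finset ℕ} (p : ℕ → ℚ[X]) (q : ℚ[X]) :
    (∑ i ∈ s, p i).comp q = ∑ i ∈ s, (p i).comp q := by
  simp [Polynomial.comp, Polynomial.eval₂_finset_sum]

lemma risingFac_eq (m : ℕ) (y : ℚ) : risingFac m y = (Rp m).eval y := by
  simp [risingFac, Rp, eval_prod]

lemma Rp_succ (m : ℕ) : Rp (m+1) = Rp m * (X + C (m : ℚ)) := by
  simp [Rp, Finset.prod_range_succ]

lemma Rp_comp (m : ℕ) : (Rp (m+1)).comp (X - C 1) = (X - C 1) * Rp m := by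
  rw [Rp, Polynomial.prod_comp, Finset.prod_range_succ']
  simp only [add_comp, X_comp, C_comp]
  rw [mul_comm]
  congr 1
  · simp
  · rw [Rp]
    refine Finset.prod_congr rfl fun j _ => ?_
    have : ((j+1:ℕ):ℚ) = (j:ℚ) + 1 := by push_cast; ring
    rw [this, map_add, map_one]
    ring

lemma DRp (m : ℕ) : Rp (m+1) - (Rp (m+1)).comp (X - C 1) = C ((m : ℚ) + 1) * Rp m := by
  rw [Rp_comp, Rp_succ, map_add, map_one]
  ring

lemma DTp (a b : ℚ) (i : ℕ) :
    Tp a b (i+1) - (Tp a b (i+1)).comp (X - C 1) = C ((i : ℚ) + 1) * Tp (a+b) b i := by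
  cases i with
  | zero =>
    rw [Tp_succ]
    show (X + C a) * 1 - ((X + C a) * 1).comp (X - C 1) = C ((0:ℚ)+1) * (1 : ℚ[X])
    simp
  | succ k =>
    rw [Tp_succ, Tp_succ]
    have hTc : ((X + C a) * ∏ j ∈ Finset.range (k+1),
          (X + C (a + (((k+1:ℕ):ℚ)+1) * b + ((j:ℚ)+1)))).comp (X - C 1)
        = (X - C 1 + C a) * ((X - C 1 + C (a + ((k:ℚ)+2)*b + 1)) *
            ∏ j ∈ Finset.range k, (X + C (a + ((k:ℚ)+2)*b + ((j:ℚ)+1)))) := by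
      rw [mul_comp, add_comp, X_comp, C_comp, Polynomial.prod_comp, Finset.prod_range_succ']
      congr 1
      rw [mul_comm]
      congr 1
      · simp only [add_comp, X_comp, C_comp]
        push_cast
        ring_nf
      · refine Finset.prod_congr rfl fun j _ => ?_
        simp only [add_comp, X_comp, C_comp]
        have : (a + (((k+1:ℕ):ℚ)+1) * b + (((j+1:ℕ):ℚ)+1)) = (a + ((k:ℚ)+2)*b + ((j:ℚ)+1)) + 1 := by
          push_cast; ring
        rw [this, map_add, map_one]
        ring
    have hT : (X + C a) * ∏ j ∈ Finset.range (k+1),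
          (X + C (a + (((k+1:ℕ):ℚ)+1) * b + ((j:ℚ)+1)))
        = (X + C a) * ((X + C (a + ((k:ℚ)+2)*b + ((k:ℚ)+1))) *
            ∏ j ∈ Finset.range k, (X + C (a + ((k:ℚ)+2)*b + ((j:ℚ)+1)))) := by
      rw [Finset.prod_range_succ, mul_comm (∏ _j ∈ _, _)]
      congr 2
      · congr 1; push_cast; ring
      · refine Finset.prod_congr rfl fun j _ => ?_
        congr 2; push_cast; ring
    rw [hTc, hT]
    have hTs : (X + C (a+b)) * ∏ j ∈ Finset.range k,
          (X + C (a + b + ((k:ℚ)+1) * b + ((j:ℚ)+1)))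
        = (X + C (a+b)) * ∏ j ∈ Finset.range k, (X + C (a + ((k:ℚ)+2)*b + ((j:ℚ)+1))) := by
      congr 1
      refine Finset.prod_congr rfl fun j _ => ?_
      congr 2; ring
    rw [hTs]
    have key : (X + C a) * (X + C (a + ((k:ℚ)+2)*b + ((k:ℚ)+1)))
        - (X - C 1 + C a) * (X - C 1 + C (a + ((k:ℚ)+2)*b + 1))
        = C (((k+1:ℕ):ℚ) + 1) * (X + C (a + b)) := by
      push_cast
      simp only [map_add, map_mul, map_one, map_ofNat, map_natCast]
      ring
    calc (X + C a) * ((X + C (a + ((k:ℚ)+2)*b + ((k:ℚ)+1))) * ∏ j ∈ Finset.range k, (X + C (a + ((k:ℚ)+2)*b + ((j:ℚ)+1))))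
          - (X - C 1 + C a) * ((X - C 1 + C (a + ((k:ℚ)+2)*b + 1)) * ∏ j ∈ Finset.range k, (X + C (a + ((k:ℚ)+2)*b + ((j:ℚ)+1))))
        = ((X + C a) * (X + C (a + ((k:ℚ)+2)*b + ((k:ℚ)+1)))
            - (X - C 1 + C a) * (X - C 1 + C (a + ((k:ℚ)+2)*b + 1)))
            * ∏ j ∈ Finset.range k, (X + C (a + ((k:ℚ)+2)*b + ((j:ℚ)+1))) := by ring
      _ = C (((k+1:ℕ):ℚ) + 1) * ((X + C (a+b)) * ∏ j ∈ Finset.range k, (X + C (a + ((k:ℚ)+2)*b + ((j:ℚ)+1)))) := by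
            rw [key]; ring

lemma const_of_shift (Q : ℚ[X]) (h : Q.comp (X - C 1) = Q) : Q = C (Q.eval 0) := by
  have h1 : ∀ x : ℚ, Q.eval (x - 1) = Q.eval x := by
    intro x
    conv_rhs => rw [← h]
    simp [eval_comp]
  have h2 : ∀ k : ℕ, Q.eval (-(k:ℚ)) = Q.eval 0 := by
    intro k
    induction k with
    | zero => simp
    | succ m ih =>
      have hm := h1 (-(m:ℚ))
      push_cast
      rw [show -((m:ℚ)+1) = -(m:ℚ) - 1 by ring, hm, ih]
  have hinj : (Set.range fun k : ℕ => -(k:ℚ)).Infinite := by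
    apply Set.infinite_range_of_injective
    intro i j hij
    have : -(i:ℚ) = -(j:ℚ) := hij
    exact_mod_cast neg_injective this
  have hroots : {x : ℚ | (Q - C (Q.eval 0)).IsRoot x}.Infinite := by
    apply Set.Infinite.mono _ hinj
    rintro x ⟨k, rfl⟩
    simp [IsRoot, h2 k]
  have hz := eq_zero_of_infinite_isRoot _ hroots
  exact sub_eq_zero.mp hz

lemma Tp_eval_neg (a b : ℚ) (i : ℕ) : (Tp a b (i+1)).eval (-a) = 0 := by
  rw [Tp_succ]
  simp

lemma keyId : ∀ (n : ℕ) (a b : ℚ),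
    (∑ i ∈ Finset.range (n+1),
      C ((n.choose i : ℚ) * (Rp (n - i)).eval (-a - b * i)) * Tp a b i) = Rp n := by
  intro n
  induction n with
  | zero =>
    intro a b
    rw [Finset.sum_range_one]
    show C ((Nat.choose 0 0 : ℚ) * (Rp 0).eval (-a - b * (0:ℕ))) * Tp a b 0 = Rp 0
    simp [Rp, Tp]
  | succ n ih =>
    intro a b
    set L : ℚ[X] := ∑ i ∈ Finset.range (n+2),
      C (((n+1).choose i : ℚ) * (Rp (n+1 - i)).eval (-a - b * i)) * Tp a b i with hL
    have hD : L - L.comp (X - C 1) = C ((n:ℚ)+1) * Rp n := by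
      have step1 : L - L.comp (X - C 1) = ∑ i ∈ Finset.range (n+2),
          C (((n+1).choose i : ℚ) * (Rp (n+1 - i)).eval (-a - b * i)) *
            (Tp a b i - (Tp a b i).comp (X - C 1)) := by
        rw [hL, finset_sum_comp, ← Finset.sum_sub_distrib]
        refine Finset.sum_congr rfl fun i _ => ?_
        rw [mul_comp, C_comp]
        ring
      rw [step1, Finset.sum_range_succ']
      have h0 : Tp a b 0 - (Tp a b 0).comp (X - C 1) = 0 := by
        show (1:ℚ[X]) - (1:ℚ[X]).comp (X - C 1) = 0
        simp
      rw [h0, mul_zero, add_zero]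
      have hterm : ∀ i ∈ Finset.range (n+1),
          C (((n+1).choose (i+1) : ℚ) * (Rp (n+1 - (i+1))).eval (-a - b * ((i+1:ℕ):ℚ))) *
            (Tp a b (i+1) - (Tp a b (i+1)).comp (X - C 1))
          = C ((n:ℚ)+1) * (C ((n.choose i : ℚ) * (Rp (n - i)).eval (-(a+b) - b * i)) * Tp (a+b) b i) := by
        intro i hi
        rw [DTp]
        have hsub : (n+1 : ℕ) - (i+1) = n - i := by omega
        rw [hsub]
        have hchoose : ((n+1).choose (i+1) : ℚ) * ((i:ℚ)+1) = ((n:ℚ)+1) * (n.choose i : ℚ) := by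
          have h := Nat.add_one_mul_choose_eq n i
          have h2 := congrArg (Nat.cast : ℕ → ℚ) h
          push_cast at h2
          linarith [h2]
        have heval : (-a - b * ((i+1:ℕ):ℚ)) = (-(a+b) - b * (i:ℚ)) := by push_cast; ring
        have hAB : (((n+1).choose (i+1) : ℚ) * (Rp (n - i)).eval (-a - b * ((i+1:ℕ):ℚ))) * ((i:ℚ)+1)
            = ((n:ℚ)+1) * ((n.choose i : ℚ) * (Rp (n - i)).eval (-(a+b) - b * (i:ℚ))) := by
          rw [heval]
          linear_combination (Rp (n - i)).eval (-(a+b) - b * (i:ℚ)) * hchoose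
        have habstract : ∀ (A B c : ℚ) (T : ℚ[X]), A * c = ((n:ℚ)+1) * B →
            C A * (C c * T) = C ((n:ℚ)+1) * (C B * T) := by
          intro A B c T h
          have h1 : C A * (C c * T) = C (A * c) * T := by rw [map_mul]; ring
          rw [h1, h, map_mul]
          ring
        exact habstract _ _ _ _ hAB
      rw [Finset.sum_congr rfl hterm, ← Finset.mul_sum, ih (a+b) b]
    have hQshift : (L - Rp (n+1)).comp (X - C 1) = L - Rp (n+1) := by
      have hDR := DRp n
      rw [sub_comp]
      have hLc : L.comp (X - C 1) = L - C ((n:ℚ)+1) * Rp n := by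
        linear_combination -hD
      rw [hLc]
      linear_combination hDR
    have hconst := const_of_shift _ hQshift
    have hevala : (L - Rp (n+1)).eval (-a) = 0 := by
      have hLa : L.eval (-a) = (Rp (n+1)).eval (-a) := by
        rw [hL, eval_finset_sum, Finset.sum_eq_single 0]
        · show eval (-a) (C (((n+1).choose 0 : ℚ) * (Rp (n+1 - 0)).eval (-a - b * (0:ℕ))) * Tp a b 0) = _
          simp [Tp]
        · intro i hi hne
          obtain ⟨j, rfl⟩ := Nat.exists_eq_succ_of_ne_zero hne
          simp [Tp_eval_neg]
        · intro h
          exact absurd (Finset.mem_range.mpr (by omega)) h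
      simp [hLa]
    have hQ0 : (L - Rp (n+1)).eval 0 = 0 := by
      have hc := congrArg (Polynomial.eval (-a)) hconst
      rw [hevala, eval_C] at hc
      simp [← hc]
    have hzero : L - Rp (n+1) = 0 := by rw [hconst, hQ0, map_zero]
    have := sub_eq_zero.mp hzero
    exact this

lemma gonc_eq (a b : ℕ) : ∀ (n : ℕ) (x : ℚ),
    gonc risingFac (fun i => -((a : ℚ) + (b : ℚ) * (i : ℚ))) n x = (Tp a b n).eval x := by
  intro n
  induction n using Nat.strong_induction_on with
  | _ n IH =>
    intro x
    rw [gonc]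
    have hsum : ∑ i ∈ (Finset.range n).attach,
        (n.choose i.1 : ℚ) * risingFac (n - i.1) (-((a : ℚ) + (b : ℚ) * (i.1 : ℚ))) *
          gonc risingFac (fun i => -((a : ℚ) + (b : ℚ) * (i : ℚ))) i.1 x
        = ∑ i ∈ Finset.range n,
        (n.choose i : ℚ) * (Rp (n - i)).eval (-(a:ℚ) - (b:ℚ) * i) * (Tp a b i).eval x := by
      rw [← Finset.sum_attach (Finset.range n) (fun i => (n.choose i : ℚ) * (Rp (n - i)).eval (-(a:ℚ) - (b:ℚ) * i) * (Tp a b i).eval x)]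
      refine Finset.sum_congr rfl fun i _ => ?_
      rw [IH i.1 (Finset.mem_range.mp i.2), risingFac_eq]
      congr 2
      ring
    rw [hsum]
    have hkey := congrArg (Polynomial.eval x) (keyId n a b)
    rw [eval_finset_sum, Finset.sum_range_succ] at hkey
    simp only [eval_mul, eval_C] at hkey
    rw [Nat.choose_self, Nat.sub_self] at hkey
    have hRp0 : (Rp 0).eval (-(a:ℚ) - (b:ℚ) * n) = 1 := by simp [Rp]
    rw [hRp0] at hkey
    rw [risingFac_eq]
    push_cast at hkey ⊢
    linarith [hkey]

/-- Equation (4.8): for the rising factorials `p_n(x) = x^{(n)}` and the arithmetic grid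
`z_i = a + b i`, the Gončarov polynomials for the grid `-Z` are
`t_n(x) = (x + a) (x + a + nb + 1)^{(n-1)} = (x + a) ∏_{j=1}^{n-1} (x + a + nb + j)`. -/
theorem goncarov_rising_factorial_arithmetic (a b : ℕ) (ha : 0 < a) (hb : 0 < b)
    (n : ℕ) (hn : 1 ≤ n) (x : ℚ) :
    gonc risingFac (fun i => -((a : ℚ) + (b : ℚ) * (i : ℚ))) n x
      = (x + a) * ∏ j ∈ Finset.Icc 1 (n - 1), (x + a + (n : ℚ) * b + j) := by
  obtain ⟨m, rfl⟩ := Nat.exists_eq_add_of_le hn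
  rw [gonc_eq, show 1 + m = m + 1 by ring, Tp_succ]
  rw [eval_mul, eval_prod]
  simp only [eval_add, eval_X, eval_C]
  congr 1
  rw [show (m + 1) - 1 = m by omega]
  rw [show Finset.Icc 1 m = Finset.Ico 1 (m+1) by rfl]
  rw [Finset.prod_Ico_eq_prod_range]
  rw [show m + 1 - 1 = m by omega]
  refine Finset.prod_congr rfl fun j _ => ?_
  push_cast
  ring
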